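/- Reduction of constant-domain satisfiability to decreasing-domain satisfiability: let φ be a one-variable first-order modal formula with counting quantifiers, m = md(φ), E a unary predicate not occurring in φ, and let N ≥ 1 be a natural number such that if φ is satisfiable with respect to QK then φ is satisfiable in a constant domain model whose domain D has |D| ≤ N. Let ζ := ζ_exp ∧ ζ_dec ∧ ∀x□^{≤m}∀x(∃[≤N]x ⊤(x) ∧ ¬∃[≤N−1]x ⊤(x)), where ⊤(x) := P₀(x) ∨ ¬P₀(x) for a predicate P₀. Then φ is satisfiable with respect to QK if and only if E(x) ∧ ζ ∧ φ^E is satisfiable with respect to QK^dec. -/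

import Mathlib

/-! Syntax of one-variable first-order modal formulas with counting quantifiers:
    φ ::= P(x) | ¬φ | (φ∧φ) | ◇φ | ∃[≤c]x φ. -/

inductive Fml : Type
  | atom : ℕ → Fml
  | neg : Fml → Fml
  | conj : Fml → Fml → Fml
  | dia : Fml → Fml
  | countLe : ℕ → Fml → Fml
deriving DecidableEq

namespace Fml

/-- Subformulas. -/
def sub : Fml → Finset Fml
  | atom n => {atom n}
  | neg ψ => insert (neg ψ) ψ.sub
  | conj ψ χ => insert (conj ψ χ) (ψ.sub ∪ χ.sub)
  | dia ψ => insert (dia ψ) ψ.sub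
  | countLe c ψ => insert (countLe c ψ) ψ.sub

/-- Modal depth. -/
def md : Fml → ℕ
  | atom _ => 0
  | neg ψ => ψ.md
  | conj ψ χ => max ψ.md χ.md
  | dia ψ => ψ.md + 1
  | countLe _ ψ => ψ.md

/-- Capacity: the largest counting-quantifier subscript (0 if none). -/
def cpt : Fml → ℕ
  | atom _ => 0
  | neg ψ => ψ.cpt
  | conj ψ χ => max ψ.cpt χ.cpt
  | dia ψ => ψ.cpt
  | countLe c ψ => max c ψ.cpt

/-- Length of the formula as a string, counting subscripts written in binary. -/
def len : Fml → ℕ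
  | atom _ => 1
  | neg ψ => ψ.len + 1
  | conj ψ χ => ψ.len + χ.len + 1
  | dia ψ => ψ.len + 1
  | countLe c ψ => ψ.len + Nat.size c + 1

/-- Predicate symbols occurring in a formula. -/
def preds : Fml → Finset ℕ
  | atom n => {n}
  | neg ψ => ψ.preds
  | conj ψ χ => ψ.preds ∪ χ.preds
  | dia ψ => ψ.preds
  | countLe _ ψ => ψ.preds

def imp (ψ χ : Fml) : Fml := neg (conj ψ (neg χ))
def or (ψ χ : Fml) : Fml := neg (conj (neg ψ) (neg χ))
def iff (ψ χ : Fml) : Fml := conj (ψ.imp χ) (χ.imp ψ)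
def box (ψ : Fml) : Fml := neg (dia (neg ψ))
/-- `∃x ψ := ¬∃[≤0]x ψ`. -/
def ex (ψ : Fml) : Fml := neg (countLe 0 ψ)
/-- `∀x ψ := ∃[≤0]x ¬ψ`. -/
def fal (ψ : Fml) : Fml := countLe 0 (neg ψ)
/-- A tautology. -/
def top : Fml := neg (conj (atom 0) (neg (atom 0)))

/-- `boxIter n ψ` is `□^n ψ`. -/
def boxIter : ℕ → Fml → Fml
  | 0, ψ => ψ
  | n+1, ψ => (boxIter n ψ).box

/-- `boxLe m ψ` is `⋀_{k=0}^{m} □^k ψ`. -/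
def boxLe : ℕ → Fml → Fml
  | 0, ψ => ψ
  | n+1, ψ => conj (boxLe n ψ) (boxIter (n+1) ψ)

end Fml

/-- A first-order Kripke model `M = (W,R,D,d,I)` (unary predicates suffice for the
one-variable fragment). -/
structure KModel where
  W : Type
  R : W → W → Prop
  D : Type
  Dne : Nonempty D
  dom : W → Set D
  domNe : ∀ w, (dom w).Nonempty
  I : W → ℕ → Set D
  Isub : ∀ w p, I w p ⊆ dom w

/-- Satisfaction `M,w ⊨^a φ`. -/
def KModel.sat (M : KModel) : Fml → M.W → M.D → Prop
  | .atom p, w, a => a ∈ M.I w p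
  | .neg ψ, w, a => ¬ M.sat ψ w a
  | .conj ψ χ, w, a => M.sat ψ w a ∧ M.sat χ w a
  | .dia ψ, w, a => ∃ v, M.R w v ∧ M.sat ψ v a
  | .countLe c ψ, w, _ => {b | b ∈ M.dom w ∧ M.sat ψ w b}.encard ≤ (c : ℕ∞)

def KModel.constDom (M : KModel) : Prop := ∀ u v, M.dom u = M.dom v
def KModel.expDom (M : KModel) : Prop := ∀ u v, M.R u v → M.dom u ⊆ M.dom v
def KModel.decDom (M : KModel) : Prop := ∀ u v, M.R u v → M.dom v ⊆ M.dom u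

/-- Satisfiability with respect to QK (constant domains). -/
def satQK (φ : Fml) : Prop :=
  ∃ M : KModel, M.constDom ∧ ∃ w a, a ∈ M.dom w ∧ M.sat φ w a

/-- Satisfiability with respect to QK^exp (expanding domains). -/
def satQKexp (φ : Fml) : Prop :=
  ∃ M : KModel, M.expDom ∧ ∃ w a, a ∈ M.dom w ∧ M.sat φ w a

/-- Satisfiability with respect to QK^dec (decreasing domains). -/
def satQKdec (φ : Fml) : Prop :=
  ∃ M : KModel, M.decDom ∧ ∃ w a, a ∈ M.dom w ∧ M.sat φ w a

/-- `R` is the immediate-successor (parent–child) relation of a rooted irreflexive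
intransitive tree of depth ≤ m with root `r`. -/
def IsTreeOfDepth {W : Type} (R : W → W → Prop) (r : W) (m : ℕ) : Prop :=
  ∃ depth : W → ℕ,
    depth r = 0 ∧ (∀ w, depth w ≤ m) ∧
    (∀ u v, R u v → depth v = depth u + 1) ∧
    (∀ v, v ≠ r → ∃! u, R u v) ∧
    (∀ v, Relation.ReflTransGen R r v)

/-- Relativization φ^E of a formula to a fresh predicate E. -/
def relE (E : ℕ) : Fml → Fml
  | .atom p => .atom p
  | .neg ψ => .neg (relE E ψ)
  | .conj ψ χ => .conj (relE E ψ) (relE E χ)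
  | .dia ψ => .dia (relE E ψ)
  | .countLe c ψ => .countLe c (.conj (.atom E) (relE E ψ))

/-- `ζ_exp := □^{≤m} ∀x (E(x) → □E(x))`. -/
def zetaExp (E m : ℕ) : Fml :=
  Fml.boxLe m (Fml.fal ((Fml.atom E).imp (Fml.box (Fml.atom E))))

/-- `ζ_dec := ∀x □^{≤m} (◇E(x) → E(x))`. -/
def zetaDec (E m : ℕ) : Fml :=
  Fml.fal (Fml.boxLe m ((Fml.dia (Fml.atom E)).imp (Fml.atom E)))

/-- `⊤(x) := P₀(x) ∨ ¬P₀(x)`. -/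
def topP (P₀ : ℕ) : Fml := (Fml.atom P₀).or (Fml.neg (Fml.atom P₀))

/-- `∀x □^{≤m} ∀x (∃[≤N]x ⊤(x) ∧ ¬∃[≤N−1]x ⊤(x))`. -/
def zetaSize (P₀ m N : ℕ) : Fml :=
  Fml.fal (Fml.boxLe m (Fml.fal
    (Fml.conj (Fml.countLe N (topP P₀)) (Fml.neg (Fml.countLe (N - 1) (topP P₀))))))

/-- `ζ := ζ_exp ∧ ζ_dec ∧ ∀x□^{≤m}∀x(∃[≤N]x ⊤(x) ∧ ¬∃[≤N−1]x ⊤(x))`. -/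
def zeta78 (E P₀ m N : ℕ) : Fml :=
  Fml.conj (zetaExp E m) (Fml.conj (zetaDec E m) (zetaSize P₀ m N))

/-! Forward: pad a constant-domain model of `φ` with at most `N` individuals by fresh ones up
to exactly `N`, interpreting `E` as the original domain. The padded model has a constant domain
of size `N` and a rigid `E`, so `ζ` holds, and `φ^E` holds of the original individuals exactly
where `φ` held.

Backward: in a decreasing-domain model, `ζ_exp` pushes `E` forward along `R`, and `ζ_dec`,
applied to the individuals of the root domain (which contains every later domain), pulls it
back. Hence `E` has one and the same extension `A` at every world within `md φ` steps of the
root, and the constant-domain restriction of the model to `A` satisfies `φ` where `φ^E` held. -/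

namespace KModel

variable {M : KModel} {ψ χ : Fml} {w : M.W} {a : M.D}

theorem sat_imp : M.sat (ψ.imp χ) w a ↔ (M.sat ψ w a → M.sat χ w a) := by
  simp only [Fml.imp, sat]; tauto

theorem sat_box : M.sat ψ.box w a ↔ ∀ v, M.R w v → M.sat ψ v a := by
  simp only [Fml.box, sat]; push Not; rfl

theorem sat_fal : M.sat ψ.fal w a ↔ ∀ b ∈ M.dom w, M.sat ψ w b := by
  simp only [Fml.fal, sat, Nat.cast_zero, nonpos_iff_eq_zero, Set.encard_eq_zero,
    Set.eq_empty_iff_forall_notMem, Set.mem_ofPred_eq, not_and, not_not]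

theorem sat_topP (P₀ : ℕ) : M.sat (topP P₀) w a := by
  simp only [topP, Fml.or, sat]; tauto

theorem sat_boxLe_succ {n : ℕ} :
    M.sat (Fml.boxLe (n + 1) ψ) w a ↔
      M.sat ψ w a ∧ ∀ v, M.R w v → M.sat (Fml.boxLe n ψ) v a := by
  induction n generalizing w with
  | zero => exact and_congr_right' sat_box
  | succ n ih =>
    change (M.sat (Fml.boxLe (n + 1) ψ) w a ∧ M.sat (Fml.boxIter (n + 1) ψ).box w a) ↔ _
    rw [ih, sat_box, and_assoc, ← forall_and]
    simp only [← imp_and]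
    rfl

theorem sat_boxLe_of_forall {n : ℕ} (h : ∀ v, M.sat ψ v a) : M.sat (Fml.boxLe n ψ) w a := by
  induction n generalizing w with
  | zero => exact h w
  | succ n ih => exact sat_boxLe_succ.2 ⟨h w, fun v _ => ih⟩

theorem sat_zeta78_of_const {E P₀ m N : ℕ} (hE : ∀ u v, M.I u E = M.I v E)
    (hsize : ∀ v, (M.dom v).encard = N) (hN : 1 ≤ N) : M.sat (zeta78 E P₀ m N) w a := by
  refine ⟨sat_boxLe_of_forall fun u => ?exp, sat_fal.2 fun b _ => ?dec, ?size⟩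
  case exp =>
    exact sat_fal.2 fun b _ => sat_imp.2 fun hb => sat_box.2 fun v _ => (hE u v).le hb
  case dec =>
    refine sat_boxLe_of_forall fun u => sat_imp.2 ?_
    rintro ⟨v, -, hb⟩
    exact (hE v u).le hb
  case size =>
    refine sat_fal.2 fun _ _ => sat_boxLe_of_forall fun u => sat_fal.2 fun _ _ => ?_
    have hall : {d | d ∈ M.dom u ∧ M.sat (topP P₀) u d} = M.dom u :=
      Set.sep_eq_self_iff_mem_true.2 fun _ _ => sat_topP P₀
    change _ ≤ _ ∧ ¬ _ ≤ _
    rw [hall, hsize, Nat.cast_le, Nat.cast_le]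
    omega

def HoldsWithin (M : KModel) (P : M.W → Prop) : ℕ → M.W → Prop
  | 0, w => P w
  | n + 1, w => P w ∧ ∀ v, M.R w v → M.HoldsWithin P n v

theorem HoldsWithin.self {P : M.W → Prop} {n : ℕ} (h : M.HoldsWithin P n w) : P w := by
  cases n
  exacts [h, h.1]

theorem HoldsWithin.mono {P : M.W → Prop} {m n : ℕ} (h : M.HoldsWithin P n w) (hmn : m ≤ n) :
    M.HoldsWithin P m w := by
  induction n generalizing m w with
  | zero => exact Nat.le_zero.1 hmn ▸ h
  | succ n ih =>
    cases m with
    | zero => exact h.self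
    | succ m => exact ⟨h.1, fun v hwv => ih (h.2 v hwv) (Nat.le_of_succ_le_succ hmn)⟩

def pad (M : KModel) (E : ℕ) (β : Type) : KModel where
  W := M.W
  R := M.R
  D := M.D ⊕ β
  Dne := M.Dne.map Sum.inl
  dom _ := Set.univ
  domNe _ := ⟨.inl M.Dne.some, trivial⟩
  I v p := Sum.inl '' if p = E then M.dom v else M.I v p
  Isub _ _ := Set.subset_univ _

theorem pad_I_eq (E : ℕ) (β : Type) (v : M.W) : (M.pad E β).I v E = Sum.inl '' M.dom v :=
  congrArg (Sum.inl '' ·) (if_pos rfl)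

theorem pad_I_rigid {E : ℕ} {β : Type} (h : M.constDom) (u v : M.W) :
    (M.pad E β).I u E = (M.pad E β).I v E := by
  rw [pad_I_eq, pad_I_eq, h u v]

theorem sat_pad_relE {E : ℕ} {β : Type} (hE : E ∉ ψ.preds) (v : M.W) (b : M.D) :
    (M.pad E β).sat (relE E ψ) v (.inl b) ↔ M.sat ψ v b := by
  induction ψ generalizing v b with
  | atom p =>
    have hp : p ≠ E := fun h => hE (by simp [Fml.preds, h])
    change Sum.inl b ∈ Sum.inl '' (if p = E then _ else _) ↔ _
    rw [if_neg hp, Sum.inl_injective.mem_set_image]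
    rfl
  | neg ψ ih => exact not_congr (ih hE v b)
  | conj ψ χ ih₁ ih₂ =>
    simp only [Fml.preds, Finset.mem_union, not_or] at hE
    exact and_congr (ih₁ hE.1 v b) (ih₂ hE.2 v b)
  | dia ψ ih => exact exists_congr fun u => and_congr_right fun _ => ih hE u b
  | countLe c ψ ih =>
    change Set.encard (α := M.D ⊕ β) _ ≤ _ ↔ Set.encard _ ≤ _
    suffices hset : {d | d ∈ (M.pad E β).dom v ∧
        (M.pad E β).sat ((Fml.atom E).conj (relE E ψ)) v d} =
        Sum.inl '' {b | b ∈ M.dom v ∧ M.sat ψ v b} by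
      rw [hset, Sum.inl_injective.encard_image]
    ext d
    constructor
    · rintro ⟨-, hd, hψ⟩
      obtain ⟨b, hb, rfl⟩ : d ∈ Sum.inl '' M.dom v := pad_I_eq E β v ▸ hd
      exact ⟨b, ⟨hb, (ih hE v b).1 hψ⟩, rfl⟩
    · rintro ⟨b, ⟨hb, hψ⟩, rfl⟩
      have hbE : Sum.inl b ∈ (M.pad E β).I v E := pad_I_eq E β v ▸ Set.mem_image_of_mem _ hb
      exact ⟨trivial, hbE, (ih hE v b).2 hψ⟩

theorem encard_pad_dom [Finite M.D] {N : ℕ} (hN : Nat.card M.D ≤ N) (E : ℕ) (v : M.W) :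
    ((M.pad E (Fin (N - Nat.card M.D))).dom v).encard = N := by
  change (Set.univ : Set (M.D ⊕ Fin (N - Nat.card M.D))).encard = N
  rw [Set.encard_univ, ENat.card_eq_coe_natCard, Nat.card_sum, Nat.card_fin,
    Nat.add_sub_cancel' hN]

def restrict (M : KModel) (A : Set M.D) (hA : A.Nonempty) : KModel where
  W := M.W
  R := M.R
  D := A
  Dne := hA.to_subtype
  dom _ := Set.univ
  domNe _ := ⟨⟨_, hA.some_mem⟩, trivial⟩
  I v p := Subtype.val ⁻¹' M.I v p
  Isub _ _ := Set.subset_univ _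

theorem sat_restrict_iff {E : ℕ} {A : Set M.D} (hA : A.Nonempty)
    (hE : M.HoldsWithin (fun v => M.I v E = A) ψ.md w) (b : A) :
    (M.restrict A hA).sat ψ w b ↔ M.sat (relE E ψ) w b := by
  induction ψ generalizing w b with
  | atom p => rfl
  | neg ψ ih => exact not_congr (ih hE b)
  | conj ψ χ ih₁ ih₂ =>
    exact and_congr (ih₁ (hE.mono (le_max_left _ _)) b) (ih₂ (hE.mono (le_max_right _ _)) b)
  | dia ψ ih => exact exists_congr fun v => and_congr_right fun hwv => ih (hE.2 v hwv) b
  | countLe c ψ ih =>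
    change Set.encard _ ≤ _ ↔ Set.encard _ ≤ _
    have hIA : M.I w E = A := hE.self
    suffices hset : {d | d ∈ M.dom w ∧ M.sat ((Fml.atom E).conj (relE E ψ)) w d} =
        Subtype.val '' {d | d ∈ (M.restrict A hA).dom w ∧ (M.restrict A hA).sat ψ w d} by
      rw [hset, Subtype.val_injective.encard_image]
      exact Iff.rfl
    ext d
    constructor
    · rintro ⟨-, hd, hψ⟩
      exact ⟨⟨d, hIA ▸ hd⟩, ⟨trivial, (ih hE _).2 hψ⟩, rfl⟩
    · rintro ⟨d, ⟨-, hψ⟩, rfl⟩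
      exact ⟨M.Isub w E (hIA ▸ d.2), hIA ▸ d.2, (ih hE d).1 hψ⟩

theorem holdsWithin_I_eq {E m : ℕ} (hdec : M.decDom) (hexp : M.sat (zetaExp E m) w a)
    (hzdec : M.sat (zetaDec E m) w a) : M.HoldsWithin (fun v => M.I v E = M.I w E) m w := by
  induction m generalizing w with
  | zero => rfl
  | succ m ih =>
    obtain ⟨hexp_w, hexp_succ⟩ := sat_boxLe_succ.1 hexp
    have hdec_w b (hb : b ∈ M.dom w) := sat_boxLe_succ.1 (sat_fal.1 hzdec b hb)
    refine ⟨rfl, fun v hwv => ?_⟩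
    -- `ζ_exp` gives `E(w) ⊆ E(v)`; `ζ_dec` gives the converse, as `E(v) ⊆ d(v) ⊆ d(w)`.
    have hstep : M.I v E = M.I w E := by
      ext b
      constructor
      · intro hb
        exact sat_imp.1 (hdec_w b (hdec w v hwv (M.Isub v E hb))).1 ⟨v, hwv, hb⟩
      · intro hb
        exact sat_box.1 (sat_imp.1 (sat_fal.1 hexp_w b (M.Isub w E hb)) hb) v hwv
    have hzdec_v : M.sat (zetaDec E m) v a :=
      sat_fal.2 fun b hb => (hdec_w b (hdec w v hwv hb)).2 v hwv
    exact hstep ▸ ih (hexp_succ v hwv) hzdec_v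

end KModel

/-- given a bound N ≥ 1 on the domain size needed for constant-domain
satisfiability of φ, φ is satisfiable with respect to QK iff `E(x) ∧ ζ ∧ φ^E` is
satisfiable with respect to QK^dec. -/
theorem stmt_8 (φ : Fml) (E P₀ : ℕ) (hE : E ∉ φ.preds) (N : ℕ) (hN1 : 1 ≤ N)
    (hN : satQK φ → ∃ M : KModel, M.constDom ∧ Finite M.D ∧ Nat.card M.D ≤ N ∧
      ∃ w a, a ∈ M.dom w ∧ M.sat φ w a) :
    satQK φ ↔
      satQKdec (Fml.conj (Fml.atom E) (Fml.conj (zeta78 E P₀ φ.md N) (relE E φ))) := by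
  constructor
  · intro hsat
    obtain ⟨M, hconst, hfin, hcard, w, a, ha, hφ⟩ := hN hsat
    refine ⟨M.pad E (Fin (N - Nat.card M.D)), fun _ _ _ => subset_rfl, w, .inl a, trivial,
      ?_, ?_, ?_⟩
    · exact (M.pad_I_eq E _ w).ge (Set.mem_image_of_mem _ ha)
    · exact KModel.sat_zeta78_of_const (KModel.pad_I_rigid hconst) (M.encard_pad_dom hcard E) hN1
    · exact (KModel.sat_pad_relE hE w a).2 hφ
  · rintro ⟨M, hdec, w, a, -, hEa, ⟨hexp, hzdec, -⟩, hφ⟩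
    have hA : (M.I w E).Nonempty := ⟨a, hEa⟩
    refine ⟨M.restrict (M.I w E) hA, fun _ _ => rfl, w, ⟨a, hEa⟩, trivial, ?_⟩
    exact (KModel.sat_restrict_iff hA (KModel.holdsWithin_I_eq hdec hexp hzdec) _).2 hφ
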